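/- arXiv:2009.05735 — 2 statements merged into one kernel-verified Lean document; each statement's English description precedes it below -/
import Mathlib

section
/- Let 0 ≤ k ≤ n and d ≥ 1. Let C be an F_2-subspace of F_2^{2n} of dimension n − k that is self-orthogonal with respect to the symplectic inner product (C ⊆ C^{⊥s}), and suppose that every element of C^{⊥s} \ C has quantum weight at least d. Then there exists an [[n, k, d]] qubit code, i.e., a subspace Q of ℂ^{2^n} of dimension 2^k satisfying the Knill–Laflamme condition for d. -/
open Matrix

open scoped BigOperators

/-- The bit-flip type error operator `X(a)`, acting on `ℂ^{2^n}` (with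
coordinates indexed by `F_2^n`) by `X(a) e_v = e_{a+v}`. -/
noncomputable def Xop (n : ℕ) (a : Fin n → ZMod 2) :
    Matrix (Fin n → ZMod 2) (Fin n → ZMod 2) ℂ :=
  Matrix.of fun w v => if w = a + v then 1 else 0

/-- The phase-flip type error operator `Z(b)`, acting on `ℂ^{2^n}` by
`Z(b) e_v = (−1)^{b·v} e_v`, the `F_2` dot product `b·v` being lifted to
`{0,1} ⊆ ℤ` in the exponent. -/
noncomputable def Zop (n : ℕ) (b : Fin n → ZMod 2) :
    Matrix (Fin n → ZMod 2) (Fin n → ZMod 2) ℂ :=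
  Matrix.of fun w v => if w = v then ((-1 : ℂ) ^ (b ⬝ᵥ v).val) else 0

/-- The quantum weight of `(a|b) ∈ F_2^{2n}`: the number of indices `i` with
`a_i ≠ 0` or `b_i ≠ 0`. -/
def wQ (n : ℕ) (a b : Fin n → ZMod 2) : ℕ :=
  (Finset.univ.filter fun i : Fin n => a i ≠ 0 ∨ b i ≠ 0).card

/-- The symplectic inner product on `F_2^{2n}`, whose elements are viewed as
pairs `(a|b)` with `a, b ∈ F_2^n`: `⟨(a|b), (a'|b')⟩_s = a·b' + a'·b`. -/
def sympl (n : ℕ) (u v : (Fin n → ZMod 2) × (Fin n → ZMod 2)) : ZMod 2 :=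
  u.1 ⬝ᵥ v.2 + v.1 ⬝ᵥ u.2

/-!
Stabilizer construction. By self-orthogonality the operators `E(c) = X(a)Z(b)`, `c = (a|b) ∈ C`,
commute; multiplying them by phases `ε(c)` taken from a mod-4 quadratic refinement of the form
`(c, c') ↦ b·a'` turns `c ↦ ε(c) E(c)` into a representation of `C` by hermitian involutions.
Its invariant space `Q` has dimension `|C|⁻¹ ∑_c tr(ε(c) E(c)) = 2ⁿ / 2ⁿ⁻ᵏ`, since `E(c)` is
traceless for `c ≠ 0`. An error `E(u)` of weight `< d` either lies in `C`, and then acts on `Q`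
as a scalar, or anticommutes with some stabilizer `N`, and then
`⟨φ, E(u) ψ⟩ = ⟨Nφ, E(u) Nψ⟩ = -⟨φ, E(u) ψ⟩`.
-/

lemma neg_one_pow_val_add (s t : ZMod 2) :
    (-1 : ℂ) ^ (s + t).val = (-1) ^ s.val * (-1) ^ t.val := by
  rw [ZMod.val_add, ← neg_one_pow_eq_pow_mod_two, pow_add]

lemma neg_one_zpow_eq_pow_val (z : ℤ) : (-1 : ℂ) ^ z = (-1) ^ (z : ZMod 2).val := by
  rcases Int.even_or_odd z with h | h
  · rw [h.neg_one_zpow, ZMod.intCast_eq_zero_iff_even.2 h, ZMod.val_zero, pow_zero]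
  · rw [h.neg_one_zpow, ZMod.intCast_eq_one_iff_odd.2 h, ZMod.val_one, pow_one]

lemma eq_add_comm_zmod_two {ι : Type*} (a v w : ι → ZMod 2) : w = a + v ↔ v = a + w := by
  constructor <;> rintro rfl <;> funext i <;> simp [← add_assoc, CharTwo.add_self_eq_zero]

section Pauli

variable {ι : Type*} [Fintype ι]

lemma sum_neg_one_pow_dotProduct [DecidableEq ι] {b : ι → ZMod 2} (hb : b ≠ 0) :
    ∑ v, (-1 : ℂ) ^ (b ⬝ᵥ v).val = 0 := by
  let χ : AddChar (ι → ZMod 2) ℂ :=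
    { toFun := fun v => (-1) ^ (b ⬝ᵥ v).val
      map_zero_eq_one' := by simp
      map_add_eq_mul' := fun v w => by simp only [dotProduct_add, neg_one_pow_val_add] }
  refine AddChar.sum_eq_zero_of_ne_one (ψ := χ) (AddChar.ne_one_iff.2 ?_)
  obtain ⟨i, hi⟩ := Function.ne_iff.1 hb
  have hbi : b i = 1 := Fin.eq_one_of_ne_zero _ hi
  refine ⟨Pi.single i 1, ?_⟩
  norm_num [χ, hbi, ZMod.val_one]

def pauliCocycle : LinearMap.BilinForm (ZMod 2) ((ι → ZMod 2) × (ι → ZMod 2)) :=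
  LinearMap.mk₂ (ZMod 2) (fun u v => u.2 ⬝ᵥ v.1)
    (fun _ _ _ => add_dotProduct ..) (fun _ _ _ => smul_dotProduct ..)
    (fun _ _ _ => dotProduct_add ..) (fun _ _ _ => dotProduct_smul ..)

@[simp]
lemma pauliCocycle_apply (u v : (ι → ZMod 2) × (ι → ZMod 2)) :
    pauliCocycle u v = u.2 ⬝ᵥ v.1 :=
  rfl

lemma sympl_eq_pauliCocycle_add {n : ℕ} (u c : (Fin n → ZMod 2) × (Fin n → ZMod 2)) :
    sympl n u c = pauliCocycle c u + pauliCocycle u c := by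
  rw [sympl, pauliCocycle_apply, pauliCocycle_apply, dotProduct_comm u.1, dotProduct_comm c.1]

noncomputable def pauli (c : (ι → ZMod 2) × (ι → ZMod 2)) :
    Matrix (ι → ZMod 2) (ι → ZMod 2) ℂ :=
  Matrix.of fun w v => if w = c.1 + v then (-1) ^ (c.2 ⬝ᵥ v).val else 0

lemma Xop_mul_Zop (n : ℕ) (a b : Fin n → ZMod 2) : Xop n a * Zop n b = pauli (a, b) := by
  ext w v
  simp [Xop, Zop, pauli, Matrix.mul_apply]

@[simp]
lemma pauli_zero : pauli (0 : (ι → ZMod 2) × (ι → ZMod 2)) = 1 := by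
  ext w v
  simp [pauli, Matrix.one_apply]

lemma conjTranspose_pauli (c : (ι → ZMod 2) × (ι → ZMod 2)) :
    (pauli c)ᴴ = (-1 : ℂ) ^ (pauliCocycle c c).val • pauli c := by
  ext w v
  simp only [pauli, Matrix.conjTranspose_apply, Matrix.of_apply, Matrix.smul_apply,
    pauliCocycle_apply]
  by_cases h : w = c.1 + v
  · rw [if_pos ((eq_add_comm_zmod_two _ _ _).1 h), if_pos h, h, dotProduct_add,
      neg_one_pow_val_add]
    simp
  · rw [if_neg (mt (eq_add_comm_zmod_two _ _ _).2 h), if_neg h, star_zero, smul_zero]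

variable [DecidableEq ι]

lemma pauli_mul (c c' : (ι → ZMod 2) × (ι → ZMod 2)) :
    pauli c * pauli c' = (-1 : ℂ) ^ (pauliCocycle c c').val • pauli (c + c') := by
  ext w v
  rw [Matrix.mul_apply, Finset.sum_eq_single (c'.1 + v) (fun u _ hu => by simp [pauli, hu])
    (by simp)]
  simp only [pauli, Matrix.of_apply, Matrix.smul_apply, Prod.fst_add, Prod.snd_add,
    add_assoc, if_true, pauliCocycle_apply, dotProduct_add, add_dotProduct, neg_one_pow_val_add]
  split_ifs <;> simp only [smul_eq_mul] <;> ring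

lemma trace_pauli_of_ne_zero {c : (ι → ZMod 2) × (ι → ZMod 2)} (hc : c ≠ 0) :
    trace (pauli c) = 0 := by
  by_cases h1 : c.1 = 0
  · have h2 : c.2 ≠ 0 := fun h2 => hc (Prod.ext h1 h2)
    simpa [trace, pauli, h1] using sum_neg_one_pow_dotProduct h2
  · refine Finset.sum_eq_zero fun v _ => ?_
    simp [pauli, h1]

lemma pauli_mul_comm (u c : (ι → ZMod 2) × (ι → ZMod 2)) :
    pauli u * pauli c =
      (-1 : ℂ) ^ (pauliCocycle c u + pauliCocycle u c).val • (pauli c * pauli u) := by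
  rw [pauli_mul, pauli_mul, smul_smul, add_comm c u, add_comm (pauliCocycle c u),
    ← neg_one_pow_val_add, add_assoc, CharTwo.add_self_eq_zero, add_zero]

end Pauli

lemma LinearMap.BilinForm.apply_add_sub_two_smul {R M : Type*} [CommRing R] [AddCommGroup M]
    [Module R M] (β : LinearMap.BilinForm R M) (hβ : β.IsSymm) (u v w : M) :
    β (u + v - 2 • w) (u + v - 2 • w) =
      β u u + β v v + 2 * β u v + 4 * (β w w - β w u - β w v) := by
  have huv := hβ.eq u v
  have huw := hβ.eq u w
  have hvw := hβ.eq v w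
  simp only [map_add, map_sub, map_nsmul, LinearMap.add_apply, LinearMap.sub_apply,
    LinearMap.smul_apply, nsmul_eq_mul]
  push_cast
  linear_combination -huv - 2 * huw - 2 * hvw

theorem exists_sign_refinement {V : Type*} [AddCommGroup V] [Module (ZMod 2) V]
    [Module.Finite (ZMod 2) V] {B : LinearMap.BilinForm (ZMod 2) V} (hB : B.IsSymm) :
    ∃ ε : V → ℂ, (∀ x, star (ε x) * ε x = 1) ∧
      ∀ x y, ε (x + y) = (-1) ^ (B x y).val * ε x * ε y := by
  -- `ε x = i ^ q x`, where `q x = x̂ᵀ B̂ x̂` for `{0,1}`-lifts `x̂`, `B̂` of the coordinates of `x`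
  -- and the matrix of `B`; then `q (x + y) ≡ q x + q y + 2 x̂ᵀ B̂ ŷ (mod 4)`.
  let b := Module.finBasis (ZMod 2) V
  let lift : V → Fin (Module.finrank (ZMod 2) V) → ℤ := fun x i => (b.repr x i).val
  let β : LinearMap.BilinForm ℤ (Fin (Module.finrank (ZMod 2) V) → ℤ) :=
    ((B.toMatrix b).map fun t => (t.val : ℤ)).toBilin'
  have hβ : β.IsSymm :=
    Matrix.isSymm_toBilin'_iff_isSymm.2 (((B.isSymm_toMatrix_iff_isSymm b).2 hB).map _)
  have lift_add (x y : V) : lift (x + y) = lift x + lift y - 2 • (lift x * lift y) := by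
    funext i
    simp only [lift, map_add, Finsupp.add_apply, Pi.add_apply, Pi.sub_apply, Pi.smul_apply,
      Pi.mul_apply]
    generalize b.repr x i = s
    generalize b.repr y i = t
    revert s t
    decide
  have cast_β (x y : V) : ((β (lift x) (lift y) : ℤ) : ZMod 2) = B x y := by
    rw [B.apply_eq_dotProduct_toMatrix_mulVec b, Matrix.toBilin'_apply]
    push_cast [lift]
    simp [dotProduct, mulVec, Finset.mul_sum, mul_assoc]
  refine ⟨fun x => Complex.I ^ β (lift x) (lift x), fun x => ?_, fun x y => ?_⟩
  · rw [Complex.star_def, map_zpow₀, Complex.conj_I, ← mul_zpow, neg_mul, Complex.I_mul_I,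
      neg_neg, _root_.one_zpow]
  · beta_reduce
    rw [lift_add, β.apply_add_sub_two_smul hβ, zpow_add₀ Complex.I_ne_zero,
      zpow_add₀ Complex.I_ne_zero, zpow_add₀ Complex.I_ne_zero, _root_.zpow_mul, _root_.zpow_mul,
      zpow_ofNat, zpow_ofNat, Complex.I_sq, Complex.I_pow_four, _root_.one_zpow,
      neg_one_zpow_eq_pow_val, cast_β]
    ring

lemma star_dotProduct_mulVec_eq_zero_of_anticommute {m 𝕜 : Type*} [Fintype m] [RCLike 𝕜]
    {M N : Matrix m m 𝕜} (hN : N.IsHermitian) (hMN : N * M = -(M * N)) {φ ψ : m → 𝕜}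
    (hφ : N *ᵥ φ = φ) (hψ : N *ᵥ ψ = ψ) : star φ ⬝ᵥ M *ᵥ ψ = 0 := by
  have h : star φ ⬝ᵥ M *ᵥ ψ = -(star φ ⬝ᵥ M *ᵥ ψ) :=
    calc star φ ⬝ᵥ M *ᵥ ψ = star (N *ᵥ φ) ⬝ᵥ M *ᵥ N *ᵥ ψ := by rw [hφ, hψ]
      _ = star φ ⬝ᵥ (N * M * N) *ᵥ ψ := by
        rw [star_mulVec, hN.eq, ← dotProduct_mulVec, mulVec_mulVec, mulVec_mulVec]
      _ = -(star φ ⬝ᵥ M *ᵥ N *ᵥ N *ᵥ ψ) := by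
        rw [hMN, neg_mul, neg_mulVec, dotProduct_neg, mul_assoc, ← mulVec_mulVec, ← mulVec_mulVec]
      _ = -(star φ ⬝ᵥ M *ᵥ ψ) := by rw [hψ, hψ]
  exact CharZero.eq_neg_self_iff.1 h

section Stabilizer

variable {ι : Type*} [Fintype ι]

/-- Phases making `c ↦ sign c • pauli c` a representation of `C` (the stabilizer group). -/
structure PauliSigns (C : Submodule (ZMod 2) ((ι → ZMod 2) × (ι → ZMod 2))) where
  sign : C → ℂ
  star_mul_self : ∀ c, star (sign c) * sign c = 1
  map_add : ∀ c c' : C, sign (c + c') =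
    (-1) ^ (pauliCocycle (c : (ι → ZMod 2) × (ι → ZMod 2)) c').val * sign c * sign c'

theorem PauliSigns.nonempty {C : Submodule (ZMod 2) ((ι → ZMod 2) × (ι → ZMod 2))}
    (hC : ∀ u ∈ C, ∀ v ∈ C, pauliCocycle u v = pauliCocycle v u) : Nonempty (PauliSigns C) :=
  have hsymm : LinearMap.BilinForm.IsSymm (pauliCocycle.domRestrict₁₂ C C) :=
    ⟨fun u v => hC u u.2 v v.2⟩
  let ⟨ε, hε_star, hε_add⟩ := exists_sign_refinement hsymm
  ⟨⟨ε, hε_star, hε_add⟩⟩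

namespace PauliSigns

variable {C : Submodule (ZMod 2) ((ι → ZMod 2) × (ι → ZMod 2))} (ε : PauliSigns C)

lemma sign_ne_zero (c : C) : ε.sign c ≠ 0 := by
  intro h
  simpa [h] using ε.star_mul_self c

@[simp]
lemma sign_zero : ε.sign 0 = 1 := by
  have h := ε.map_add 0 0
  simp only [add_zero, ZeroMemClass.coe_zero, map_zero, ZMod.val_zero, pow_zero,
    one_mul] at h
  exact (mul_eq_left₀ (ε.sign_ne_zero 0)).1 h.symm

noncomputable def stabilizer (c : C) : Matrix (ι → ZMod 2) (ι → ZMod 2) ℂ :=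
  ε.sign c • pauli (c : (ι → ZMod 2) × (ι → ZMod 2))

@[simp]
lemma stabilizer_zero : ε.stabilizer 0 = 1 := by
  simp [stabilizer]

lemma isHermitian_stabilizer (c : C) : (ε.stabilizer c).IsHermitian := by
  have h := ε.map_add c c
  rw [← two_nsmul, ZModModule.char_nsmul_eq_zero, sign_zero] at h
  rw [IsHermitian, stabilizer, conjTranspose_smul, conjTranspose_pauli, smul_smul]
  congr 1
  set σ : ℂ := (-1) ^ (pauliCocycle (c : (ι → ZMod 2) × (ι → ZMod 2)) c).val
  have hσ : σ ^ 2 = 1 := by rw [← pow_mul, mul_comm, pow_mul, neg_one_sq, one_pow]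
  linear_combination (star (ε.sign c) * σ) * h + (σ ^ 2 * ε.sign c) * ε.star_mul_self c +
    ε.sign c * hσ

variable [DecidableEq ι]

lemma stabilizer_add (c c' : C) : ε.stabilizer (c + c') = ε.stabilizer c * ε.stabilizer c' := by
  rw [stabilizer, stabilizer, stabilizer, smul_mul_smul_comm, pauli_mul, smul_smul, ε.map_add,
    Submodule.coe_add]
  congr 1
  ring

noncomputable def rep : Representation ℂ (Multiplicative C) ((ι → ZMod 2) → ℂ) where
  toFun c := Matrix.toLin' (ε.stabilizer c.toAdd)
  map_one' := by simp [Module.End.one_eq_id]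
  map_mul' c c' := by simp [stabilizer_add, Matrix.toLin'_mul, Module.End.mul_eq_comp]

noncomputable def code : Submodule ℂ ((ι → ZMod 2) → ℂ) :=
  ε.rep.invariants

lemma mem_code {ψ : (ι → ZMod 2) → ℂ} : ψ ∈ ε.code ↔ ∀ c, ε.stabilizer c *ᵥ ψ = ψ :=
  ⟨fun h c => h (Multiplicative.ofAdd c), fun h c => h c.toAdd⟩

lemma natCard_mul_finrank_code : Nat.card C * Module.finrank ℂ ε.code = 2 ^ Fintype.card ι := by
  have : Fintype C := Fintype.ofFinite C
  have : Invertible (Nat.card (Multiplicative C) : ℂ) := invertibleOfNonzero (by simp)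
  have hsum : ∑ g, ε.rep.character g = 2 ^ Fintype.card ι := by
    rw [Fintype.sum_eq_single 1 fun g hg => ?_]
    · simp [Representation.character, rep]
    · have hc : ((Multiplicative.toAdd g : C) : (ι → ZMod 2) × (ι → ZMod 2)) ≠ 0 := by
        simpa using hg
      simp [Representation.character, rep, stabilizer, trace_pauli_of_ne_zero hc]
  have h := ε.rep.card_inv_mul_sum_char_eq_finrank
  rw [hsum, Nat.card_congr Multiplicative.toAdd] at h
  have hC : (Nat.card C : ℂ) ≠ 0 := by simp
  exact_mod_cast (eq_inv_mul_iff_mul_eq₀ hC).1 h.symm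

lemma pauli_mulVec_of_mem_code {u : (ι → ZMod 2) × (ι → ZMod 2)} (hu : u ∈ C)
    {ψ : (ι → ZMod 2) → ℂ} (hψ : ψ ∈ ε.code) : pauli u *ᵥ ψ = (ε.sign ⟨u, hu⟩)⁻¹ • ψ := by
  have h := ε.mem_code.1 hψ ⟨u, hu⟩
  rw [stabilizer, smul_mulVec] at h
  exact (eq_inv_smul_iff₀ (ε.sign_ne_zero _)).2 h

lemma star_dotProduct_pauli_mulVec_eq_zero {u c : (ι → ZMod 2) × (ι → ZMod 2)} (hc : c ∈ C)
    (huc : pauliCocycle c u + pauliCocycle u c = 1) {φ ψ : (ι → ZMod 2) → ℂ} (hφ : φ ∈ ε.code)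
    (hψ : ψ ∈ ε.code) : star φ ⬝ᵥ pauli u *ᵥ ψ = 0 := by
  refine star_dotProduct_mulVec_eq_zero_of_anticommute (ε.isHermitian_stabilizer ⟨c, hc⟩) ?_
    (ε.mem_code.1 hφ _) (ε.mem_code.1 hψ _)
  rw [stabilizer, Matrix.smul_mul, Matrix.mul_smul, pauli_mul_comm c, add_comm, huc,
    ZMod.val_one, pow_one, neg_one_smul, smul_neg]

end PauliSigns

end Stabilizer

/-- if `C ⊆ F_2^{2n}` is an `(n−k)`-dimensional subspace,
self-orthogonal for the symplectic inner product, and every element of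
`C^{⊥s} \ C` has quantum weight at least `d`, then there is an `[[n, k, d]]`
qubit code: a subspace `Q ⊆ ℂ^{2^n}` with `dim_ℂ Q = 2^k` satisfying the
Knill–Laflamme condition for `d`. -/
theorem statement9 (n k d : ℕ) (hk : k ≤ n) (hd : 1 ≤ d)
    (C : Submodule (ZMod 2) ((Fin n → ZMod 2) × (Fin n → ZMod 2)))
    (hdim : Module.finrank (ZMod 2) C = n - k)
    (hself : ∀ u ∈ C, ∀ v ∈ C, sympl n u v = 0)
    (hwt : ∀ u : (Fin n → ZMod 2) × (Fin n → ZMod 2),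
        (∀ c ∈ C, sympl n u c = 0) → u ∉ C → d ≤ wQ n u.1 u.2) :
    ∃ Q : Submodule ℂ ((Fin n → ZMod 2) → ℂ),
      Module.finrank ℂ Q = 2 ^ k ∧
      ∀ a b : Fin n → ZMod 2, wQ n a b ≤ d - 1 →
        ∀ φ ∈ Q, ∀ ψ ∈ Q, star φ ⬝ᵥ ψ = 0 →
          star φ ⬝ᵥ (Xop n a * Zop n b).mulVec ψ = 0 := by
  obtain ⟨ε⟩ := PauliSigns.nonempty fun u hu v hv =>
    CharTwo.add_eq_zero.1 ((sympl_eq_pauliCocycle_add v u).symm.trans (hself v hv u hu))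
  refine ⟨ε.code, ?_, fun a b hab φ hφ ψ hψ horth => ?_⟩
  · have h := ε.natCard_mul_finrank_code
    rw [Module.natCard_eq_pow_finrank (K := ZMod 2), Nat.card_zmod, hdim, Fintype.card_fin] at h
    have hn : 2 ^ n = 2 ^ (n - k) * 2 ^ k := by rw [← pow_add, Nat.sub_add_cancel hk]
    exact Nat.eq_of_mul_eq_mul_left (by positivity) (h.trans hn)
  rw [Xop_mul_Zop]
  by_cases hu : (a, b) ∈ C
  · rw [ε.pauli_mulVec_of_mem_code hu hψ, dotProduct_smul, horth, smul_zero]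
  obtain ⟨c, hc, huc⟩ : ∃ c ∈ C, sympl n (a, b) c ≠ 0 := by
    by_contra! h
    have := hwt (a, b) h hu
    dsimp only at this
    omega
  refine ε.star_dotProduct_pauli_mulVec_eq_zero hc ?_ hφ hψ
  rw [← sympl_eq_pauliCocycle_add]
  exact Fin.eq_one_of_ne_zero _ huc
end

section
/- (CSS construction) Let C_1 and C_2 be linear codes in F^n of dimensions k_1 and k_2 respectively, with k_1 + k_2 ≥ n and C_1^⊥ ⊆ C_2 (Euclidean duals). Let d = min{ wH(C_2 \ C_1^⊥), wH(C_1 \ C_2^⊥) }. Then there exists an [[n, k_1 + k_2 − n, d]]_q code, i.e., a subspace Q of ℂ^{q^n} of dimension q^{k_1+k_2−n} satisfying the Knill–Laflamme condition for d. -/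
open Matrix

open scoped BigOperators

/-- The error operator `X(a)`, acting on `ℂ^{q^n}` (with coordinates indexed by
`F^n`) by `X(a) e_v = e_{a+v}`. -/
noncomputable def Xq (F : Type) [Field F] [Fintype F] [DecidableEq F]
    (n : ℕ) (a : Fin n → F) : Matrix (Fin n → F) (Fin n → F) ℂ :=
  Matrix.of fun w v => if w = a + v then 1 else 0

/-- The error operator `Z(b)`, acting on `ℂ^{q^n}` by
`Z(b) e_v = ω^{Tr(b·v)} e_v`, where `ω = exp(2πi/p)` and the absolute trace
`Tr(b·v) ∈ F_p` is lifted to `{0,…,p−1} ⊆ ℤ`. -/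
noncomputable def Zq (p : ℕ) (F : Type) [Field F] [Fintype F] [DecidableEq F]
    [CharP F p] [Algebra (ZMod p) F]
    (n : ℕ) (b : Fin n → F) : Matrix (Fin n → F) (Fin n → F) ℂ :=
  Matrix.of fun w v =>
    if w = v then
      Complex.exp (2 * Real.pi * Complex.I / p) ^
        (Algebra.trace (ZMod p) F (b ⬝ᵥ v)).val
    else 0

/-- The quantum weight of `(a|b)`: the number of indices `i` with `a_i ≠ 0` or
`b_i ≠ 0`. -/
noncomputable def wQq (F : Type) [Zero F] (n : ℕ) (a b : Fin n → F) : ℕ :=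
  {i : Fin n | a i ≠ 0 ∨ b i ≠ 0}.ncard

/-- The Hamming weight of a vector in `F^n`. -/
noncomputable def wH (F : Type) [Zero F] (n : ℕ) (x : Fin n → F) : ℕ :=
  {i : Fin n | x i ≠ 0}.ncard

/-- `Q` is an `[[n, k, d]]_q` code (`q = |F|`): a subspace of `ℂ^{q^n}` of
dimension `q^k` satisfying the Knill–Laflamme condition for `d`, i.e. for all
errors `X(a)Z(b)` of quantum weight at most `d − 1` and all orthogonal
`φ, ψ ∈ Q` one has `⟨φ, X(a)Z(b) ψ⟩ = 0`. -/
noncomputable def IsQECC (p : ℕ) (F : Type) [Field F] [Fintype F] [DecidableEq F]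
    [CharP F p] [Algebra (ZMod p) F]
    (n k d : ℕ) (Q : Submodule ℂ ((Fin n → F) → ℂ)) : Prop :=
  Module.finrank ℂ Q = Fintype.card F ^ k ∧
  ∀ a b : Fin n → F, wQq F n a b ≤ d - 1 →
    ∀ φ ∈ Q, ∀ ψ ∈ Q, star φ ⬝ᵥ ψ = 0 →
      star φ ⬝ᵥ (Xq F n a * Zq p F n b).mulVec ψ = 0

/-- The Euclidean dual of a linear code `C ⊆ F^n`. -/
def dualE (F : Type) [Field F] (n : ℕ) (C : Submodule F (Fin n → F)) :
    Set (Fin n → F) :=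
  {x | ∀ c ∈ C, x ⬝ᵥ c = 0}

/-! Let `D = C₁^⊥ ⊆ C₂` and let `Q` consist of the functions on `F^n` supported on `C₂`
and constant on the cosets of `D`; these are the functions on `C₂ / D`, so
`dim Q = q^(k₁ + k₂ - n)`. Let `X(a)Z(b)` be an error of weight below `d`. If `b ∉ C₁ = D^⊥`,
some `x ∈ D` has `Tr(b·x) ≠ 0`, and translating the sum `⟨φ, X(a)Z(b)ψ⟩` by `x` multiplies it
by the nontrivial phase `ω^Tr(b·x)`, so it vanishes. If `a ∉ C₂`, then `X(a)Z(b)` moves the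
support of `ψ` off `C₂`. Otherwise the weight bound forces `a ∈ D` and `b ∈ C₂^⊥`, and
`X(a)Z(b)` is the identity on `Q`. -/

theorem Fintype.sum_eq_zero_of_add_right_eq_mul {G K : Type*} [AddGroup G] [Fintype G] [Field K]
    {f : G → K} {x : G} {c : K} (hc : c ≠ 1) (hf : ∀ w, f (w + x) = c * f w) :
    ∑ w, f w = 0 := by
  have hshift : ∑ w, f w = c * ∑ w, f w :=
    calc ∑ w, f w = ∑ w, f (w + x) := (Equiv.sum_comp (Equiv.addRight x) f).symm
      _ = c * ∑ w, f w := by simp only [hf, Finset.mul_sum]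
  have := sub_eq_zero.mpr hshift
  rw [← one_sub_mul] at this
  exact (mul_eq_zero.mp this).resolve_left (sub_ne_zero.mpr hc.symm)

theorem exp_two_pi_I_div_pow_val {p : ℕ} [NeZero p] (t : ZMod p) :
    Complex.exp (2 * Real.pi * Complex.I / p) ^ t.val = ZMod.stdAddChar t := by
  rw [ZMod.stdAddChar_apply, ZMod.toCircle_apply, ← Complex.exp_nat_mul]
  ring_nf

section ErrorOperators

variable {p : ℕ} [NeZero p] {F : Type} [Field F] [Fintype F] [DecidableEq F]
  [CharP F p] [Algebra (ZMod p) F] {n : ℕ}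

theorem Xq_mulVec (a : Fin n → F) (χ : (Fin n → F) → ℂ) :
    Xq F n a *ᵥ χ = fun w => χ (w - a) := by
  ext w
  simp [Xq, mulVec, dotProduct, eq_comm (a := w), ← eq_sub_iff_add_eq']

theorem Zq_mulVec (b : Fin n → F) (χ : (Fin n → F) → ℂ) :
    Zq p F n b *ᵥ χ =
      fun v => ZMod.stdAddChar (Algebra.trace (ZMod p) F (b ⬝ᵥ v)) * χ v := by
  ext v
  simp [Zq, mulVec, dotProduct, exp_two_pi_I_div_pow_val]

theorem Xq_mul_Zq_mulVec (a b : Fin n → F) (χ : (Fin n → F) → ℂ) :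
    (Xq F n a * Zq p F n b) *ᵥ χ =
      fun w => ZMod.stdAddChar (Algebra.trace (ZMod p) F (b ⬝ᵥ (w - a))) * χ (w - a) := by
  rw [← mulVec_mulVec, Zq_mulVec, Xq_mulVec]

end ErrorOperators

section CosetFunctions

open Module

variable {K V : Type*} [Field K] [AddCommGroup V] [Module K V] (D C : Submodule K V)

open scoped Classical in
noncomputable def cosetFunctions : ((C ⧸ D.comap C.subtype) → ℂ) →ₗ[ℂ] (V → ℂ) where
  toFun g w := if h : w ∈ C then g (Submodule.Quotient.mk ⟨w, h⟩) else 0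
  map_add' g g' := by ext w; by_cases h : w ∈ C <;> simp [h]
  map_smul' c g := by ext w; by_cases h : w ∈ C <;> simp [h]

theorem cosetFunctions_injective : Function.Injective (cosetFunctions D C) := by
  refine (injective_iff_map_eq_zero _).mpr fun g hg => funext fun z => ?_
  obtain ⟨⟨w, hw⟩, rfl⟩ := Submodule.Quotient.mk_surjective _ z
  simpa [cosetFunctions, hw] using congrFun hg w

noncomputable def cssCode : Submodule ℂ (V → ℂ) := LinearMap.range (cosetFunctions D C)

variable {D C}

theorem apply_eq_zero_of_mem_cssCode {ψ : V → ℂ} (hψ : ψ ∈ cssCode D C) {w : V}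
    (hw : w ∉ C) : ψ w = 0 := by
  obtain ⟨g, rfl⟩ := hψ
  simp [cosetFunctions, hw]

theorem apply_add_of_mem_cssCode (hDC : D ≤ C) {ψ : V → ℂ} (hψ : ψ ∈ cssCode D C) (w : V)
    {x : V} (hx : x ∈ D) : ψ (w + x) = ψ w := by
  obtain ⟨g, rfl⟩ := hψ
  by_cases hw : w ∈ C
  · have hwx : w + x ∈ C := C.add_mem hw (hDC hx)
    simp only [cosetFunctions, LinearMap.coe_mk, AddHom.coe_mk, dif_pos hw, dif_pos hwx]
    congr 1
    rw [Submodule.Quotient.eq]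
    simpa using hx
  · have hwx : w + x ∉ C := fun h => hw (by simpa using C.sub_mem h (hDC hx))
    simp [cosetFunctions, hw, hwx]

theorem finrank_cssCode [Fintype K] [FiniteDimensional K V] (hDC : D ≤ C) :
    finrank ℂ (cssCode D C) = Fintype.card K ^ (finrank K C - finrank K D) := by
  have : Finite (C ⧸ D.comap C.subtype) := Module.finite_of_finite K
  let _ : Fintype (C ⧸ D.comap C.subtype) := Fintype.ofFinite _
  have hquot : finrank K (C ⧸ D.comap C.subtype) = finrank K C - finrank K D := by
    rw [← Submodule.finrank_quotient_add_finrank (D.comap C.subtype),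
      (Submodule.comapSubtypeEquivOfLe hDC).finrank_eq, Nat.add_sub_cancel]
  rw [cssCode, LinearMap.finrank_range_of_inj (cosetFunctions_injective D C),
    Module.finrank_fintype_fun_eq_card, Module.card_eq_pow_finrank (K := K), hquot]

end CosetFunctions

section Weights

variable {F : Type} [Zero F] {n : ℕ}

theorem wH_eq_zero_iff {x : Fin n → F} : wH F n x = 0 ↔ x = 0 := by
  rw [wH, Set.ncard_eq_zero]
  simp [Set.eq_empty_iff_forall_notMem, funext_iff]

theorem wH_le_wQq_left (a b : Fin n → F) : wH F n a ≤ wQq F n a b :=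
  Set.ncard_le_ncard (fun _ hi => Or.inl hi) (Set.toFinite _)

theorem wH_le_wQq_right (a b : Fin n → F) : wH F n b ≤ wQq F n a b :=
  Set.ncard_le_ncard (fun _ hi => Or.inr hi) (Set.toFinite _)

theorem mem_of_wH_le_sInf_sub_one {A B : Set (Fin n → F)} (hB : 0 ∈ B) {x : Fin n → F}
    (hxA : x ∈ A) (hx : wH F n x ≤ sInf (wH F n '' (A \ B)) - 1) : x ∈ B := by
  by_contra hxB
  have hle : sInf (wH F n '' (A \ B)) ≤ wH F n x := Nat.sInf_le ⟨x, ⟨hxA, hxB⟩, rfl⟩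
  have hx0 : wH F n x = 0 := by omega
  exact hxB (wH_eq_zero_iff.mp hx0 ▸ hB)

end Weights

theorem exists_trace_mul_ne_zero (K : Type*) {L : Type*} [Field K] [Field L] [Algebra K L]
    [FiniteDimensional K L] [Algebra.IsSeparable K L] {s : L} (hs : s ≠ 0) :
    ∃ c, Algebra.trace K L (c * s) ≠ 0 := by
  obtain ⟨t, ht⟩ := Algebra.trace_surjective K L 1
  exact ⟨t / s, by rw [div_mul_cancel₀ t hs, ht]; exact one_ne_zero⟩

section DualCode

open Module

variable {F : Type} [Field F] {n : ℕ}

def dualCode (C : Submodule F (Fin n → F)) : Submodule F (Fin n → F) :=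
  LinearMap.BilinForm.orthogonal (dotProductBilin F F) C

theorem coe_dualCode (C : Submodule F (Fin n → F)) :
    (dualCode C : Set (Fin n → F)) = dualE F n C := by
  ext x
  simp [dualCode, dualE, LinearMap.BilinForm.mem_orthogonal_iff, dotProduct_comm x]

theorem dotProductBilin_isRefl :
    LinearMap.BilinForm.IsRefl (dotProductBilin F F : LinearMap.BilinForm F (Fin n → F)) :=
  fun x y h => by simpa [dotProduct_comm] using h

theorem dotProductBilin_nondegenerate :
    LinearMap.BilinForm.Nondegenerate (dotProductBilin F F : LinearMap.BilinForm F (Fin n → F)) :=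
  (dotProductBilin_isRefl (F := F) (n := n)).nondegenerate_iff_separatingLeft.mpr
    fun x hx => dotProduct_eq_zero x hx

theorem finrank_dualCode (C : Submodule F (Fin n → F)) :
    finrank F (dualCode C) = n - finrank F C := by
  rw [dualCode, LinearMap.BilinForm.finrank_orthogonal dotProductBilin_nondegenerate,
    finrank_fin_fun]

theorem dualCode_dualCode (C : Submodule F (Fin n → F)) : dualCode (dualCode C) = C :=
  LinearMap.BilinForm.orthogonal_orthogonal dotProductBilin_nondegenerate
    dotProductBilin_isRefl C

theorem exists_mem_dualCode_trace_ne_zero (K : Type*) [Field K] [Algebra K F]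
    [FiniteDimensional K F] [Algebra.IsSeparable K F] {C : Submodule F (Fin n → F)}
    {b : Fin n → F} (hb : b ∉ C) : ∃ x ∈ dualCode C, Algebra.trace K F (b ⬝ᵥ x) ≠ 0 := by
  obtain ⟨y, hy, hby⟩ : ∃ y ∈ dualCode C, b ⬝ᵥ y ≠ 0 := by
    by_contra! h
    rw [← dualCode_dualCode C, ← SetLike.mem_coe, coe_dualCode] at hb
    exact hb h
  obtain ⟨c, hc⟩ := exists_trace_mul_ne_zero K hby
  exact ⟨c • y, (dualCode C).smul_mem c hy, by rwa [dotProduct_smul, smul_eq_mul]⟩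

end DualCode

section KnillLaflamme

variable {p : ℕ} [NeZero p] {F : Type} [Field F] [Fintype F] [DecidableEq F]
  [CharP F p] [Algebra (ZMod p) F] {n : ℕ}

theorem star_dotProduct_Xq_mul_Zq_mulVec_eq_zero_of_trace_ne_zero {a b x : Fin n → F}
    {φ ψ : (Fin n → F) → ℂ} (hφ : ∀ w, φ (w + x) = φ w) (hψ : ∀ w, ψ (w + x) = ψ w)
    (hx : Algebra.trace (ZMod p) F (b ⬝ᵥ x) ≠ 0) :
    star φ ⬝ᵥ (Xq F n a * Zq p F n b) *ᵥ ψ = 0 := by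
  rw [Xq_mul_Zq_mulVec, dotProduct]
  refine Fintype.sum_eq_zero_of_add_right_eq_mul (x := x)
    (c := ZMod.stdAddChar (Algebra.trace (ZMod p) F (b ⬝ᵥ x))) ?_ fun w => ?_
  · rwa [← AddChar.map_zero_eq_one (ZMod.stdAddChar (N := p)),
      ZMod.injective_stdAddChar.ne_iff]
  · simp only [Pi.star_apply, hφ, add_sub_right_comm w x a, hψ, dotProduct_add, map_add,
      AddChar.map_add_eq_mul]
    ring

theorem star_dotProduct_Xq_mul_Zq_mulVec_eq_zero_of_notMem {a b : Fin n → F}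
    {C : Submodule F (Fin n → F)} {φ ψ : (Fin n → F) → ℂ} (hφ : ∀ w ∉ C, φ w = 0)
    (hψ : ∀ w ∉ C, ψ w = 0) (ha : a ∉ C) :
    star φ ⬝ᵥ (Xq F n a * Zq p F n b) *ᵥ ψ = 0 := by
  rw [Xq_mul_Zq_mulVec, dotProduct]
  refine Finset.sum_eq_zero fun w _ => ?_
  by_cases hw : w ∈ C
  · have : w - a ∉ C := fun h => ha (by simpa using C.sub_mem hw h)
    simp [hψ _ this]
  · simp [hφ w hw]

theorem Xq_mul_Zq_mulVec_eq_self {a b : Fin n → F} {C : Submodule F (Fin n → F)}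
    {ψ : (Fin n → F) → ℂ} (hψC : ∀ w ∉ C, ψ w = 0) (hψa : ∀ w, ψ (w - a) = ψ w)
    (hb : b ∈ dualE F n C) :
    (Xq F n a * Zq p F n b) *ᵥ ψ = ψ := by
  rw [Xq_mul_Zq_mulVec]
  ext w
  by_cases hw : w - a ∈ C
  · rw [hb _ hw, map_zero, AddChar.map_zero_eq_one, one_mul, hψa]
  · rw [hψC _ hw, mul_zero, ← hψa, hψC _ hw]

end KnillLaflamme

theorem statement10_general (p : ℕ) [Fact p.Prime] (F : Type) [Field F] [Fintype F]
    [DecidableEq F] [CharP F p] [Algebra (ZMod p) F]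
    (n k1 k2 : ℕ)
    (C1 C2 : Submodule F (Fin n → F))
    (hk1 : Module.finrank F C1 = k1) (hk2 : Module.finrank F C2 = k2)
    (hnest : dualE F n C1 ⊆ (C2 : Set (Fin n → F))) :
    ∃ Q : Submodule ℂ ((Fin n → F) → ℂ),
      IsQECC p F n (k1 + k2 - n)
        (min (sInf (wH F n '' ((C2 : Set (Fin n → F)) \ dualE F n C1)))
             (sInf (wH F n '' ((C1 : Set (Fin n → F)) \ dualE F n C2)))) Q := by
  set D := dualCode C1
  have hDC2 : D ≤ C2 := fun x hx => hnest (coe_dualCode C1 ▸ hx)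
  have hk1n : k1 ≤ n := hk1 ▸ (Submodule.finrank_le C1).trans_eq (Module.finrank_fin_fun F)
  refine ⟨cssCode D C2, ?_, fun a b hwt φ hφ ψ hψ horth => ?_⟩
  · rw [finrank_cssCode hDC2, finrank_dualCode, hk1, hk2]
    congr 1
    omega
  by_cases hb : b ∈ C1
  · by_cases ha : a ∈ C2
    · have haD : a ∈ D := by
        rw [← SetLike.mem_coe, coe_dualCode]
        refine mem_of_wH_le_sInf_sub_one (B := dualE F n C1) (fun c _ => zero_dotProduct c)
          ha ?_
        have := wH_le_wQq_left a b
        omega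
      have hbC2 : b ∈ dualE F n C2 := by
        refine mem_of_wH_le_sInf_sub_one (B := dualE F n C2) (fun c _ => zero_dotProduct c)
          hb ?_
        have := wH_le_wQq_right a b
        omega
      have hψa : ∀ w, ψ (w - a) = ψ w := fun w => by
        rw [sub_eq_add_neg]
        exact apply_add_of_mem_cssCode hDC2 hψ w (D.neg_mem haD)
      rwa [Xq_mul_Zq_mulVec_eq_self (fun w hw => apply_eq_zero_of_mem_cssCode hψ hw) hψa hbC2]
    · exact star_dotProduct_Xq_mul_Zq_mulVec_eq_zero_of_notMem
        (fun w hw => apply_eq_zero_of_mem_cssCode hφ hw)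
        (fun w hw => apply_eq_zero_of_mem_cssCode hψ hw) ha
  · obtain ⟨x, hxD, hx⟩ := exists_mem_dualCode_trace_ne_zero (ZMod p) hb
    exact star_dotProduct_Xq_mul_Zq_mulVec_eq_zero_of_trace_ne_zero
      (fun w => apply_add_of_mem_cssCode hDC2 hφ w hxD)
      (fun w => apply_add_of_mem_cssCode hDC2 hψ w hxD) hx

/-- CSS construction: if `C_1, C_2 ⊆ F^n` are linear codes of
dimensions `k_1, k_2` with `k_1 + k_2 ≥ n` and `C_1^⊥ ⊆ C_2`, and
`d = min{wH(C_2 \ C_1^⊥), wH(C_1 \ C_2^⊥)}` (minimum Hamming weight over the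
respective difference sets), then there is an `[[n, k_1 + k_2 − n, d]]_q`
code. -/
theorem statement10 (p : ℕ) [Fact p.Prime] (F : Type) [Field F] [Fintype F]
    [DecidableEq F] [CharP F p] [Algebra (ZMod p) F]
    (n k1 k2 : ℕ) (hn : n ≤ k1 + k2)
    (C1 C2 : Submodule F (Fin n → F))
    (hk1 : Module.finrank F C1 = k1) (hk2 : Module.finrank F C2 = k2)
    (hnest : dualE F n C1 ⊆ (C2 : Set (Fin n → F))) :
    ∃ Q : Submodule ℂ ((Fin n → F) → ℂ),
      IsQECC p F n (k1 + k2 - n)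
        (min (sInf (wH F n '' ((C2 : Set (Fin n → F)) \ dualE F n C1)))
             (sInf (wH F n '' ((C1 : Set (Fin n → F)) \ dualE F n C2)))) Q :=
  statement10_general p F n k1 k2 C1 C2 hk1 hk2 hnest
end
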